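/- Let H be a connected k-uniform hypergraph with n vertices, at least one edge, maximum degree Δ, minimum degree δ, and signless Laplacian eigenpair (ρ, x). Then x_max ≥ Δ/√(δ² + (n−1)Δ²), and equality holds if and only if H is regular. -/

import Mathlib

open Finset Matrix

variable {V : Type*} [Fintype V] [DecidableEq V]

/-- The incidence matrix of a hypergraph with vertex type `V` and edge set `E`:
`B(v,e) = 1` if `v ∈ e` and `0` otherwise. -/
def inc (E : Finset (Finset V)) : Matrix V ↥E ℝ :=
  fun v e => if v ∈ (e : Finset V) then 1 else 0

/-- The signless Laplacian matrix `Q = B * Bᵀ`. -/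
def signlessLap (E : Finset (Finset V)) : Matrix V V ℝ :=
  inc E * (inc E)ᵀ

/-- The degree of a vertex: the number of edges containing it. -/
def deg (E : Finset (Finset V)) (v : V) : ℕ :=
  (E.filter fun e => v ∈ e).card

/-- A hypergraph is connected if the reflexive-transitive closure of the relation
"`u ≠ v` and some edge contains both `u` and `v`" relates every pair of vertices. -/
def HConnected (E : Finset (Finset V)) : Prop :=
  ∀ u v : V, Relation.ReflTransGen (fun a b => a ≠ b ∧ ∃ e ∈ E, a ∈ e ∧ b ∈ e) u v

/-- A hypergraph is regular if all vertices have the same degree. -/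
def HRegular (E : Finset (Finset V)) : Prop :=
  ∃ r, ∀ v : V, deg E v = r

/-- A signless Laplacian eigenpair `(ρ, x)`: `x` is entrywise positive,
normalized by `∑ v, x v ^ 2 = 1`, and `Q x = ρ x`. -/
def Eigenpair (E : Finset (Finset V)) (ρ : ℝ) (x : V → ℝ) : Prop :=
  (∀ v, 0 < x v) ∧ (∑ v, x v ^ 2 = 1) ∧ (signlessLap E).mulVec x = ρ • x

/-!
Since `∑ x_v² = 1`, the bound says `(Δ² − δ²) x_max² ≤ Δ² ∑_v (x_max² − x_v²)`. For regular `H`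
this is trivial; otherwise it is strict. Let `u` have minimum degree. If `Δ x_u < δ x_max`, the
term of `u` alone suffices. Otherwise combine the eigen-equation at `u`,
`ρ x_u ≤ δ (x_u + (k − 1) x_max)`, with the eigen-equation at a vertex of maximum degree, which by
double counting gives `k Δ x_max − ρ x_max ≤ ∑_v d_v (x_max − x_v)`; eliminating `ρ` leaves the
strict inequality. For regular `H`, `ρ = k Δ` because `Q` is symmetric with `Q 1 = k Δ 1`, so the
eigen-equation at a maximum of `x` forces its neighbours to be maxima too; by connectedness `x` is
constant, which is the equality case.
-/

theorem sum_sum_mem_comm {β : Type*} [AddCommMonoid β] (F : Finset (Finset V))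
    (f : Finset V → V → β) :
    ∑ e ∈ F, ∑ v ∈ e, f e v = ∑ v, ∑ e ∈ F with v ∈ e, f e v :=
  sum_comm' fun e v => by simp

theorem sum_le_add_mul_of_mem {ι : Type*} [DecidableEq ι] {x : ι → ℝ} {M : ℝ} (hxM : ∀ i, x i ≤ M)
    {e : Finset ι} {k : ℕ} (he : #e = k) {u : ι} (hu : u ∈ e) :
    ∑ w ∈ e, x w ≤ x u + (k - 1) * M := by
  rw [← add_sum_erase e x hu]
  gcongr
  calc ∑ w ∈ e.erase u, x w ≤ #(e.erase u) • M := sum_le_card_nsmul _ _ _ fun w _ => hxM w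
    _ = (k - 1) * M := by
      rw [card_erase_of_mem hu, he, nsmul_eq_mul, Nat.cast_pred (he ▸ card_pos.2 ⟨u, hu⟩)]

theorem sq_sub_sq_mul_sq_lt {k D d ρ M a T : ℝ} (hk : 2 ≤ k) (hd : 0 ≤ d) (hdD : d < D)
    (ha : 0 < a) (haM : a ≤ M) (hT : 0 ≤ T) (h₁ : ρ * a ≤ d * (a + (k - 1) * M))
    (h₂ : k * D * M - ρ * M ≤ d * (M - a) + D * T) :
    (D ^ 2 - d ^ 2) * M ^ 2 < D ^ 2 * (M ^ 2 - a ^ 2 + M * T) := by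
  have hM : 0 < M := ha.trans_le haM
  have hD : 0 < D := hd.trans_lt hdD
  rcases lt_or_ge (D * a) (d * M) with hsmall | hlarge
  · have hsq : (D * a) ^ 2 < (d * M) ^ 2 := by gcongr
    nlinarith [mul_nonneg (sq_nonneg D) (mul_nonneg hM.le hT)]
  · -- `a` times the gap is `D M² (h₁'s slack) + a D M (h₂'s slack) + hslack`, in which `ρ` cancels.
    have hslack : 0 < (D * a - d * M) * (k * D * M ^ 2 - D * a ^ 2 - d * a * M)
        + d * D * M * (M - a) ^ 2 := by
      have hfactor : 0 < k * D * M ^ 2 - D * a ^ 2 - d * a * M := by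
        have : D * a ^ 2 ≤ D * M ^ 2 := by gcongr
        have : d * a * M ≤ d * M * M := by gcongr
        have : d * M ^ 2 < D * M ^ 2 := by gcongr
        nlinarith [mul_nonneg (sub_nonneg.2 hk) (by positivity : 0 ≤ D * M ^ 2)]
      rcases hlarge.lt_or_eq with hlt | heq
      · nlinarith [mul_pos (sub_pos.2 hlt) hfactor,
          mul_nonneg (mul_nonneg (mul_nonneg hd hD.le) hM.le) (sq_nonneg (M - a))]
      · have hd' : 0 < d := by nlinarith
        have haM' : a < M := by nlinarith
        rw [heq, sub_self, zero_mul, zero_add]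
        exact mul_pos (by positivity) (by nlinarith)
    have h₁' := mul_le_mul_of_nonneg_left h₁ (by positivity : 0 ≤ D * M ^ 2)
    have h₂' := mul_le_mul_of_nonneg_left h₂ (by positivity : 0 ≤ a * D * M)
    have : 0 < a * (D ^ 2 * (M ^ 2 - a ^ 2 + M * T) - (D ^ 2 - d ^ 2) * M ^ 2) := by
      linarith
    exact sub_pos.1 (pos_of_mul_pos_right this ha.le)

theorem div_sqrt_lt_iff {a b c : ℝ} (ha : 0 ≤ a) (hb : 0 ≤ b) (hc : 0 < c) :
    a / √c < b ↔ a ^ 2 < b ^ 2 * c := by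
  rw [div_lt_iff₀ (Real.sqrt_pos.2 hc), ← pow_lt_pow_iff_left₀ ha (by positivity) two_ne_zero,
    mul_pow, Real.sq_sqrt hc.le]

theorem eq_div_sqrt_of_sq_mul_eq {a b c : ℝ} (ha : 0 ≤ a) (hb : 0 ≤ b) (hc : 0 < c)
    (h : b ^ 2 * c = a ^ 2) : b = a / √c := by
  rw [eq_div_iff (Real.sqrt_pos.2 hc).ne', ← Real.sqrt_sq ha, ← h, Real.sqrt_mul' _ hc.le,
    Real.sqrt_sq hb]

theorem signlessLap_mulVec_apply (E : Finset (Finset V)) (x : V → ℝ) (v : V) :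
    (signlessLap E *ᵥ x) v = ∑ e ∈ E with v ∈ e, ∑ w ∈ e, x w := by
  rw [signlessLap, ← mulVec_mulVec]
  simp only [mulVec, dotProduct, inc, transpose_apply, ite_mul, one_mul, zero_mul]
  rw [sum_filter, ← sum_coe_sort E]
  refine sum_congr rfl fun e _ => ?_
  rw [sum_ite_mem, univ_inter]

theorem signlessLap_mulVec_one {k : ℕ} {E : Finset (Finset V)} (hunif : ∀ e ∈ E, #e = k) :
    signlessLap E *ᵥ 1 = fun v => (k * deg E v : ℝ) := by
  ext v
  rw [signlessLap_mulVec_apply, deg, card_eq_sum_ones, Nat.cast_sum, mul_sum]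
  refine sum_congr rfl fun e he => ?_
  simp [hunif e (mem_filter.1 he).1]

namespace Eigenpair

variable {E : Finset (Finset V)} {ρ : ℝ} {x : V → ℝ} {k : ℕ} {M : ℝ}

theorem mul_apply (hx : Eigenpair E ρ x) (v : V) :
    ρ * x v = ∑ e ∈ E with v ∈ e, ∑ w ∈ e, x w := by
  rw [← signlessLap_mulVec_apply, hx.2.2, Pi.smul_apply, smul_eq_mul]

theorem eigenvalue_nonneg (hx : Eigenpair E ρ x) (v : V) : 0 ≤ ρ :=
  nonneg_of_mul_nonneg_left (hx.mul_apply v ▸ sum_nonneg fun _ _ =>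
    sum_nonneg fun w _ => (hx.1 w).le) (hx.1 v)

theorem mul_le_deg_mul (hx : Eigenpair E ρ x) (hunif : ∀ e ∈ E, #e = k)
    (hxM : ∀ v, x v ≤ M) (u : V) : ρ * x u ≤ deg E u * (x u + (k - 1) * M) := by
  rw [hx.mul_apply, deg, ← nsmul_eq_mul]
  exact sum_le_card_nsmul _ _ _ fun e he =>
    sum_le_add_mul_of_mem hxM (hunif e (mem_filter.1 he).1) (mem_filter.1 he).2

theorem mul_deg_mul_sub_le (hx : Eigenpair E ρ x) (hunif : ∀ e ∈ E, #e = k)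
    (hxM : ∀ v, x v ≤ M) (w : V) :
    k * deg E w * M - ρ * x w ≤ ∑ v, deg E v * (M - x v) := by
  have hedge : ∀ e ∈ {e ∈ E | w ∈ e}, ∑ v ∈ e, (M - x v) = k * M - ∑ v ∈ e, x v := fun e he => by
    rw [sum_sub_distrib, sum_const, nsmul_eq_mul, hunif e (mem_filter.1 he).1]
  calc k * deg E w * M - ρ * x w = ∑ e ∈ E with w ∈ e, ∑ v ∈ e, (M - x v) := by
        rw [sum_congr rfl hedge, sum_sub_distrib, ← hx.mul_apply, sum_const,
          nsmul_eq_mul, deg]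
        ring
    _ = ∑ v, ∑ e ∈ {e ∈ E | w ∈ e} with v ∈ e, (M - x v) := sum_sum_mem_comm _ _
    _ ≤ ∑ v, ∑ e ∈ E with v ∈ e, (M - x v) := by
        refine sum_le_sum fun v _ => sum_le_sum_of_subset_of_nonneg (fun e => ?_)
          fun _ _ _ => sub_nonneg.2 (hxM v)
        simp only [mem_filter]
        tauto
    _ = ∑ v, deg E v * (M - x v) := by simp only [sum_const, nsmul_eq_mul, deg]

theorem sq_sub_deg_sq_mul_sq_lt (hx : Eigenpair E ρ x) (hk : 2 ≤ k) (hunif : ∀ e ∈ E, #e = k)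
    (hxM : ∀ v, x v ≤ M) {Δ : ℕ} (hΔ : ∀ v, deg E v ≤ Δ) {u w : V} (hw : deg E w = Δ)
    (hu : deg E u < Δ) :
    ((Δ : ℝ) ^ 2 - (deg E u : ℝ) ^ 2) * M ^ 2 < (Δ : ℝ) ^ 2 * (Fintype.card V * M ^ 2 - 1) := by
  set T := ∑ v ∈ univ.erase u, (M - x v)
  have hT : 0 ≤ T := sum_nonneg fun v _ => sub_nonneg.2 (hxM v)
  have h₂ : k * Δ * M - ρ * M ≤ deg E u * (M - x u) + Δ * T :=
    calc k * Δ * M - ρ * M ≤ k * deg E w * M - ρ * x w := by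
          rw [hw]
          gcongr
          exacts [hx.eigenvalue_nonneg u, hxM w]
      _ ≤ ∑ v, deg E v * (M - x v) := hx.mul_deg_mul_sub_le hunif hxM w
      _ = deg E u * (M - x u) + ∑ v ∈ univ.erase u, deg E v * (M - x v) :=
          (add_sum_erase _ _ (mem_univ u)).symm
      _ ≤ deg E u * (M - x u) + Δ * T := by
          rw [mul_sum]
          gcongr with v
          · exact sub_nonneg.2 (hxM v)
          · exact_mod_cast hΔ v
  have hS : M ^ 2 - x u ^ 2 + M * T ≤ Fintype.card V * M ^ 2 - 1 :=
    calc M ^ 2 - x u ^ 2 + M * T = M ^ 2 - x u ^ 2 + ∑ v ∈ univ.erase u, M * (M - x v) := by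
          rw [mul_sum]
      _ ≤ M ^ 2 - x u ^ 2 + ∑ v ∈ univ.erase u, (M ^ 2 - x v ^ 2) := by
          gcongr with v
          nlinarith [hx.1 v, hxM v]
      _ = ∑ v, (M ^ 2 - x v ^ 2) := add_sum_erase _ (fun v => M ^ 2 - x v ^ 2) (mem_univ u)
      _ = Fintype.card V * M ^ 2 - 1 := by
          rw [sum_sub_distrib, hx.2.1, sum_const, card_univ, nsmul_eq_mul]
  calc ((Δ : ℝ) ^ 2 - (deg E u : ℝ) ^ 2) * M ^ 2 < Δ ^ 2 * (M ^ 2 - x u ^ 2 + M * T) :=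
        sq_sub_sq_mul_sq_lt (by exact_mod_cast hk) (Nat.cast_nonneg _) (by exact_mod_cast hu)
          (hx.1 u) (hxM u) hT (hx.mul_le_deg_mul hunif hxM u) h₂
    _ ≤ Δ ^ 2 * (Fintype.card V * M ^ 2 - 1) := by gcongr

theorem eigenvalue_eq_of_regular [Nonempty V] (hx : Eigenpair E ρ x) (hunif : ∀ e ∈ E, #e = k)
    {r : ℕ} (hreg : ∀ v, deg E v = r) : ρ = k * r := by
  have hsymm : (signlessLap E)ᵀ = signlessLap E := by
    rw [signlessLap, transpose_mul, transpose_transpose]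
  have hsum : ρ * (1 ⬝ᵥ x) = k * r * (1 ⬝ᵥ x) := by
    calc ρ * (1 ⬝ᵥ x) = 1 ⬝ᵥ (signlessLap E *ᵥ x) := by rw [hx.2.2, dotProduct_smul, smul_eq_mul]
      _ = (signlessLap E *ᵥ 1) ⬝ᵥ x := by rw [dotProduct_mulVec, ← hsymm, vecMul_transpose, hsymm]
      _ = k * r * (1 ⬝ᵥ x) := by
        simp only [signlessLap_mulVec_one hunif, hreg, dotProduct, mul_sum, Pi.one_apply, one_mul]
  have hpos : 0 < 1 ⬝ᵥ x := sum_pos (fun v _ => by simpa using hx.1 v) univ_nonempty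
  exact mul_right_cancel₀ hpos.ne' hsum

theorem eq_of_isGreatest_of_regular (hx : Eigenpair E ρ x) (hunif : ∀ e ∈ E, #e = k)
    (hconn : HConnected E) {r : ℕ} (hreg : ∀ v, deg E v = r)
    (hmax : IsGreatest (Set.range x) M) (v : V) : x v = M := by
  obtain ⟨p, hp⟩ := hmax.1
  have hxM : ∀ v, x v ≤ M := fun v => hmax.2 ⟨v, rfl⟩
  have : Nonempty V := ⟨p⟩
  have hρ := hx.eigenvalue_eq_of_regular hunif hreg
  have hspread : ∀ a b, (a ≠ b ∧ ∃ e ∈ E, a ∈ e ∧ b ∈ e) → x a = M → x b = M := by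
    rintro a b ⟨-, e, he, hae, hbe⟩ ha
    have hsum : ∑ e ∈ E with a ∈ e, ∑ w ∈ e, x w = ∑ e ∈ E with a ∈ e, ∑ w ∈ e, M := by
      rw [← hx.mul_apply, ha, hρ, sum_congr rfl fun e he => by
        rw [sum_const, hunif e (mem_filter.1 he).1], sum_const, ← deg, hreg]
      simp only [nsmul_eq_mul]
      ring
    rw [sum_eq_sum_iff_of_le fun e _ => sum_le_sum fun w _ => hxM w] at hsum
    exact (sum_eq_sum_iff_of_le fun w _ => hxM w).1
      (hsum e (mem_filter.2 ⟨he, hae⟩)) b hbe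
  induction hconn p v with
  | refl => exact hp
  | tail _ hab ih => exact hspread _ _ hab ih

end Eigenpair

/-- For a connected `k`-graph with `n` vertices, at least one edge, maximum degree `Δ`,
minimum degree `δ` and signless Laplacian eigenpair `(ρ, x)`:
`x_max ≥ Δ/√(δ² + (n−1)Δ²)`, with equality iff `H` is regular. -/
theorem xmax_ge_delta_bound {V : Type*} [Fintype V] [DecidableEq V] (k : ℕ)
    (hk : 2 ≤ k) (E : Finset (Finset V)) (hunif : ∀ e ∈ E, e.card = k)
    (hconn : HConnected E) (hE : E.Nonempty)
    (ρ : ℝ) (x : V → ℝ) (hx : Eigenpair E ρ x)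
    (Δ δ : ℕ) (hΔ : IsGreatest (Set.range (deg E)) Δ) (hδ : IsLeast (Set.range (deg E)) δ)
    (xmax : ℝ) (hmax : IsGreatest (Set.range x) xmax) :
    (Δ : ℝ) / Real.sqrt ((δ : ℝ) ^ 2 + ((Fintype.card V : ℝ) - 1) * (Δ : ℝ) ^ 2) ≤ xmax ∧
      (xmax = (Δ : ℝ) / Real.sqrt ((δ : ℝ) ^ 2 + ((Fintype.card V : ℝ) - 1) * (Δ : ℝ) ^ 2)
        ↔ HRegular E) := by
  obtain ⟨u, hu⟩ := hδ.1
  obtain ⟨w, hw⟩ := hΔ.1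
  have hdegΔ : ∀ v, deg E v ≤ Δ := fun v => hΔ.2 ⟨v, rfl⟩
  have hxM : ∀ v, x v ≤ xmax := fun v => hmax.2 ⟨v, rfl⟩
  have hM : 0 < xmax := by
    obtain ⟨v, hv⟩ := hmax.1
    exact hv ▸ hx.1 v
  obtain ⟨e₀, he₀⟩ := hE
  obtain ⟨v₀, hv₀⟩ := card_pos.1 (by rw [hunif e₀ he₀]; omega)
  have hn : 2 ≤ Fintype.card V := (hunif e₀ he₀ ▸ hk).trans (card_le_univ e₀)
  have hΔpos : 0 < Δ := (card_pos.2 ⟨e₀, mem_filter.2 ⟨he₀, hv₀⟩⟩).trans_le (hdegΔ v₀)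
  have hA : 0 < (δ : ℝ) ^ 2 + ((Fintype.card V : ℝ) - 1) * (Δ : ℝ) ^ 2 := by
    have : (1 : ℝ) ≤ Fintype.card V - 1 := by
      rw [le_sub_iff_add_le]
      exact_mod_cast hn
    have : (0 : ℝ) < Δ := by exact_mod_cast hΔpos
    nlinarith [sq_nonneg (δ : ℝ)]
  rcases (hw ▸ hδ.2 ⟨w, rfl⟩ : δ ≤ Δ).eq_or_lt with hδΔ | hδΔ
  · have hreg : ∀ v, deg E v = Δ := fun v => (hdegΔ v).antisymm (hδΔ ▸ hδ.2 ⟨v, rfl⟩)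
    have hconst := hx.eq_of_isGreatest_of_regular hunif hconn hreg hmax
    have hnorm : Fintype.card V * xmax ^ 2 = 1 := by
      simp only [← hx.2.1, hconst, sum_const, card_univ, nsmul_eq_mul]
    have heq := eq_div_sqrt_of_sq_mul_eq (Nat.cast_nonneg Δ) hM.le hA (by
      rw [hδΔ]
      linear_combination (Δ : ℝ) ^ 2 * hnorm)
    exact ⟨heq.ge, iff_of_true heq ⟨Δ, hreg⟩⟩
  · have hgap := hx.sq_sub_deg_sq_mul_sq_lt hk hunif hxM hdegΔ hw (hu ▸ hδΔ)
    rw [hu] at hgap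
    have hlt := (div_sqrt_lt_iff (Nat.cast_nonneg Δ) hM.le hA).2 (by linarith)
    refine ⟨hlt.le, iff_of_false hlt.ne' ?_⟩
    rintro ⟨r, hr⟩
    exact hδΔ.ne (hu ▸ hw ▸ (hr u).trans (hr w).symm)
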